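/- If a classifier C satisfies log(2/(1+e^{−ε/2}))-rational fairness and ε'-fair treatment (for some finite ε') with respect to a context P, then C satisfies ε-predictive parity with respect to P. -/

import Mathlib

open scoped Classical
open Finset

/-- Multiplicative distance between nonnegative reals, valued in `ℝ≥0∞`. -/
noncomputable def mdist (x y : ℝ) : ENNReal :=
  if x = 0 ∧ y = 0 then 0
  else if 0 < x ∧ 0 < y then ENNReal.ofReal (Real.log (max (x / y) (y / x)))
  else ⊤

/-- Probability of an event `E` under a finitely supported distribution `D`. -/
noncomputable def pr {S : Type} [Fintype S] (D : S → ℝ) (E : S → Prop) : ℝ :=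
  ∑ σ, if E σ then D σ else 0

/-- Conditional probability `Pr[A | B]`, with the convention that it is `0`
when `Pr[B] = 0` (division by zero). -/
noncomputable def cpr {S : Type} [Fintype S] (D : S → ℝ) (A B : S → Prop) : ℝ :=
  pr D (fun σ => A σ ∧ B σ) / pr D B

/-- `D` is a probability mass function. -/
def IsProb {S : Type} [Fintype S] (D : S → ℝ) : Prop :=
  (∀ σ, 0 ≤ D σ) ∧ ∑ σ, D σ = 1

/-- `ε`-fair treatment: conditioned on each class, the classifier's outcome
distribution is `ε`-close (multiplicatively) between any two groups. -/
def FairTreatment {S Ψ G Θ Ω : Type} [Fintype S] (D : S → ℝ) (f : S → Ψ) (g : S → G)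
    (O : S → Θ) (C : Θ → Ω) (ε : ℝ) : Prop :=
  ∀ (X Y : G) (c : Ψ) (o : Ω),
    mdist (cpr D (fun σ => C (O σ) = o) (fun σ => f σ = c ∧ g σ = X))
          (cpr D (fun σ => C (O σ) = o) (fun σ => f σ = c ∧ g σ = Y)) ≤ ENNReal.ofReal ε

/-- `ε`-predictive parity: conditioned on each outcome, the class distribution
is `ε`-close (multiplicatively) between any two groups. -/
def PredParity {S Ψ G Θ Ω : Type} [Fintype S] (D : S → ℝ) (f : S → Ψ) (g : S → G)
    (O : S → Θ) (C : Θ → Ω) (ε : ℝ) : Prop :=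
  ∀ (X Y : G) (o : Ω) (c : Ψ),
    mdist (cpr D (fun σ => f σ = c) (fun σ => C (O σ) = o ∧ g σ = X))
          (cpr D (fun σ => f σ = c) (fun σ => C (O σ) = o ∧ g σ = Y)) ≤ ENNReal.ofReal ε

/-- Expected utility of a mixed action `d` (a distribution over actions),
conditioned on the event `B`. -/
noncomputable def EU {S Ψ A : Type} [Fintype S] [Fintype Ψ] [Fintype A]
    (D : S → ℝ) (f : S → Ψ) (u : Ψ → A → ℝ) (B : S → Prop) (d : A → ℝ) : ℝ :=
  ∑ a, d a * ∑ y, cpr D (fun σ => f σ = y) B * u y a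

/-- `δ`-rational fairness: for every finite action space and `[0,1]`-valued utility,
there is a fair (group-independent, possibly mixed) strategy that is a
`δ`-approximate Nash equilibrium of the induced Bayesian decision game. -/
def RatFair {S Ψ G Θ Ω : Type} [Fintype S] [Fintype Ψ] [Fintype G] [Fintype Ω]
    (D : S → ℝ) (f : S → Ψ) (g : S → G) (O : S → Θ) (C : Θ → Ω) (δ : ℝ) : Prop :=
  ∀ (A : Type) [Fintype A] (u : Ψ → A → ℝ), (∀ y a, 0 ≤ u y a ∧ u y a ≤ 1) →
    ∃ s : G → Ω → A → ℝ,
      (∀ X o, (∀ a, 0 ≤ s X o a) ∧ ∑ a, s X o a = 1) ∧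
      (∀ X Y o, s X o = s Y o) ∧
      (∀ X o, 0 < pr D (fun σ => g σ = X ∧ C (O σ) = o) →
        ∀ d : A → ℝ, (∀ a, 0 ≤ d a) → (∑ a, d a = 1) →
          EU D f u (fun σ => g σ = X ∧ C (O σ) = o) d ≤
            Real.exp δ * EU D f u (fun σ => g σ = X ∧ C (O σ) = o) (s X o))

/-!
Fair treatment with a finite bound forces `p = Pr[f = c | C = o, g = X]` and
`q = Pr[f = c | C = o, g = Y]` to vanish together. When both are positive, offer the decision
maker a bet paying `1` if the class is `c` against a sure payoff `θ = √(p q)`. The fair strategy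
plays the bet with the same probability `s₁ = 1 - s₀` in both groups, so the equilibrium
conditions for the deviations "always bet" in group `X` and "never bet" in group `Y` read
`p ≤ E (s₁ p + s₀ θ)` and `θ ≤ E (s₁ q + s₀ θ)`, with `E = 2 / (1 + e^{-ε/2})`. Weighting them
by `q` and `θ` and using `θ² = p q` gives `2 p ≤ E (p + θ)`, i.e. `e^{-ε/2} p ≤ √(p q)`, which
squares to `p ≤ e^ε q`.
-/

open Real

section Probability

variable {S : Type} [Fintype S] {D : S → ℝ}

lemma pr_congr {E E' : S → Prop} (h : ∀ σ, E σ ↔ E' σ) : pr D E = pr D E' :=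
  Finset.sum_congr rfl fun σ _ => if_congr (h σ) rfl rfl

lemma pr_nonneg (hD : ∀ σ, 0 ≤ D σ) (E : S → Prop) : 0 ≤ pr D E :=
  Finset.sum_nonneg fun σ _ => by split <;> simp [hD σ]

lemma pr_mono (hD : ∀ σ, 0 ≤ D σ) {E E' : S → Prop} (h : ∀ σ, E σ → E' σ) :
    pr D E ≤ pr D E' :=
  Finset.sum_le_sum fun σ _ => by
    by_cases hE : E σ
    · simp [hE, h σ hE]
    · simp only [hE, if_false]
      split <;> simp [hD σ]

lemma cpr_nonneg (hD : ∀ σ, 0 ≤ D σ) (A B : S → Prop) : 0 ≤ cpr D A B :=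
  div_nonneg (pr_nonneg hD _) (pr_nonneg hD _)

lemma cpr_le_one (hD : ∀ σ, 0 ≤ D σ) (A B : S → Prop) : cpr D A B ≤ 1 :=
  div_le_one_of_le₀ (pr_mono hD fun _ => And.right) (pr_nonneg hD _)

lemma cpr_pos_iff (hD : ∀ σ, 0 ≤ D σ) {A B : S → Prop} :
    0 < cpr D A B ↔ 0 < pr D (fun σ => A σ ∧ B σ) := by
  refine ⟨fun h => ?_, fun h => div_pos h (h.trans_le (pr_mono hD fun _ => And.right))⟩
  rcases div_pos_iff.1 h with ⟨hAB, -⟩ | ⟨hAB, -⟩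
  · exact hAB
  · exact absurd hAB (pr_nonneg hD _).not_gt

lemma pr_pos_of_cpr_pos (hD : ∀ σ, 0 ≤ D σ) {A B : S → Prop} (h : 0 < cpr D A B) :
    0 < pr D B :=
  ((cpr_pos_iff hD).1 h).trans_le (pr_mono hD fun _ => And.right)

lemma cpr_and_comm (A B B' : S → Prop) :
    cpr D A (fun σ => B σ ∧ B' σ) = cpr D A (fun σ => B' σ ∧ B σ) := by
  unfold cpr
  congr 1 <;> exact pr_congr fun _ => by tauto

lemma sum_cpr_fiber_eq_one {Ψ : Type} [Fintype Ψ] (f : S → Ψ) {B : S → Prop}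
    (hB : pr D B ≠ 0) : ∑ y, cpr D (fun σ => f σ = y) B = 1 := by
  have hfiber : ∑ y, pr D (fun σ => f σ = y ∧ B σ) = pr D B := by
    unfold pr
    rw [Finset.sum_comm]
    refine Finset.sum_congr rfl fun σ _ => ?_
    by_cases hB : B σ <;> simp [hB]
  unfold cpr
  rw [← Finset.sum_div, hfiber, div_self hB]

end Probability

lemma pos_iff_of_mdist_ne_top {x y : ℝ} (h : mdist x y ≠ ⊤) : 0 < x ↔ 0 < y := by
  unfold mdist at h
  split_ifs at h with hzero hpos
  · simp [hzero.1, hzero.2]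
  · exact iff_of_true hpos.1 hpos.2
  · exact absurd rfl h

lemma mdist_le_ofReal_of_le_exp_mul {x y ε : ℝ} (hx : 0 < x) (hy : 0 < y)
    (hxy : x ≤ exp ε * y) (hyx : y ≤ exp ε * x) : mdist x y ≤ ENNReal.ofReal ε := by
  rw [mdist, if_neg fun h => hx.ne' h.1, if_pos ⟨hx, hy⟩]
  refine ENNReal.ofReal_le_ofReal ((log_le_iff_le_exp (lt_max_of_lt_left (div_pos hx hy))).2 ?_)
  exact max_le ((div_le_iff₀ hy).2 hxy) ((div_le_iff₀ hx).2 hyx)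

lemma FairTreatment.cpr_pos_iff_cpr_pos {S Ψ G Θ Ω : Type} [Fintype S] {D : S → ℝ} {f : S → Ψ}
    {g : S → G} {O : S → Θ} {C : Θ → Ω} {ε' : ℝ} (hD : ∀ σ, 0 ≤ D σ)
    (hft : FairTreatment D f g O C ε') (X Y : G) (o : Ω) (c : Ψ) :
    0 < cpr D (fun σ => f σ = c) (fun σ => C (O σ) = o ∧ g σ = X) ↔
      0 < cpr D (fun σ => f σ = c) (fun σ => C (O σ) = o ∧ g σ = Y) := by
  have hsupport :=
    pos_iff_of_mdist_ne_top (ne_top_of_le_ne_top ENNReal.ofReal_ne_top (hft X Y c o))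
  simp only [cpr_pos_iff hD] at hsupport ⊢
  convert hsupport using 2 <;> exact pr_congr fun _ => and_left_comm

lemma exp_neg_half_mul_le_sqrt_of_bet {ε p q s₁ s₀ : ℝ} (hp : 0 ≤ p) (hq : 0 < q)
    (hs : s₁ + s₀ = 1)
    (hbet : p ≤ 2 / (1 + exp (-ε / 2)) * (s₁ * p + s₀ * √(p * q)))
    (habstain : √(p * q) ≤ 2 / (1 + exp (-ε / 2)) * (s₁ * q + s₀ * √(p * q))) :
    exp (-ε / 2) * p ≤ √(p * q) := by
  set θ := √(p * q)
  set E := 2 / (1 + exp (-ε / 2))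
  have hθ : θ * θ = p * q := mul_self_sqrt (mul_nonneg hp hq.le)
  have hweighted : q * (2 * p) ≤ q * (E * (p + θ)) :=
    calc q * (2 * p) = q * p + θ * θ := by rw [hθ]; ring
      _ ≤ q * (E * (s₁ * p + s₀ * θ)) + θ * (E * (s₁ * q + s₀ * θ)) :=
        add_le_add (mul_le_mul_of_nonneg_left hbet hq.le)
          (mul_le_mul_of_nonneg_left habstain (sqrt_nonneg _))
      _ = q * (E * (p + θ)) := by linear_combination (q * E * (p + θ)) * hs + (E * s₀) * hθ
  have h2p := le_of_mul_le_mul_left hweighted hq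
  rw [mul_comm, div_mul_eq_mul_div, le_div_iff₀ (by positivity)] at h2p
  linarith

lemma le_exp_mul_of_exp_neg_half_mul_le_sqrt {ε p q : ℝ} (hp : 0 < p) (hq : 0 ≤ q)
    (h : exp (-ε / 2) * p ≤ √(p * q)) : p ≤ exp ε * q := by
  have hsq := mul_self_le_mul_self (by positivity) h
  rw [mul_self_sqrt (mul_nonneg hp.le hq)] at hsq
  have hexp : exp ε * (exp (-ε / 2) * exp (-ε / 2)) = 1 := by
    rw [← exp_add, ← exp_add]
    ring_nf
    exact exp_zero
  refine le_of_mul_le_mul_left ?_ hp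
  calc p * p = exp ε * (exp (-ε / 2) * p * (exp (-ε / 2) * p)) := by
        linear_combination (-(p * p)) * hexp
    _ ≤ exp ε * (p * q) := by gcongr
    _ = p * (exp ε * q) := by ring

noncomputable def betUtility {Ψ : Type} (c : Ψ) (θ : ℝ) (y : Ψ) (a : Bool) : ℝ :=
  if a then (if y = c then 1 else 0) else θ

lemma betUtility_mem_Icc {Ψ : Type} (c : Ψ) {θ : ℝ} (hθ₀ : 0 ≤ θ) (hθ₁ : θ ≤ 1) (y : Ψ)
    (a : Bool) :
    0 ≤ betUtility c θ y a ∧ betUtility c θ y a ≤ 1 := by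
  unfold betUtility
  split_ifs <;> simp [hθ₀, hθ₁]

section Game

variable {S Ψ G Θ Ω : Type} [Fintype S] [Fintype Ψ] {D : S → ℝ}

lemma EU_betUtility (f : S → Ψ) (c : Ψ) (θ : ℝ) {B : S → Prop} (hB : pr D B ≠ 0)
    (d : Bool → ℝ) :
    EU D f (betUtility c θ) B d = d true * cpr D (fun σ => f σ = c) B + d false * θ := by
  simp only [EU, betUtility, Fintype.sum_bool, if_true, Bool.false_eq_true, if_false,
    mul_ite, mul_one, mul_zero, Finset.sum_ite_eq', Finset.mem_univ, ← Finset.sum_mul,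
    sum_cpr_fiber_eq_one f hB, one_mul]

lemma RatFair.cpr_le_exp_mul [Fintype G] [Fintype Ω] {f : S → Ψ} {g : S → G} {O : S → Θ}
    {C : Θ → Ω} {ε : ℝ} (hD : ∀ σ, 0 ≤ D σ)
    (hrf : RatFair D f g O C (log (2 / (1 + exp (-ε / 2))))) (X Y : G) (o : Ω) (c : Ψ)
    (hp : 0 < cpr D (fun σ => f σ = c) (fun σ => C (O σ) = o ∧ g σ = X))
    (hq : 0 < cpr D (fun σ => f σ = c) (fun σ => C (O σ) = o ∧ g σ = Y)) :
    cpr D (fun σ => f σ = c) (fun σ => C (O σ) = o ∧ g σ = X) ≤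
      exp ε * cpr D (fun σ => f σ = c) (fun σ => C (O σ) = o ∧ g σ = Y) := by
  simp only [cpr_and_comm _ (fun σ => C (O σ) = o)] at hp hq ⊢
  set p := cpr D (fun σ => f σ = c) (fun σ => g σ = X ∧ C (O σ) = o)
  set q := cpr D (fun σ => f σ = c) (fun σ => g σ = Y ∧ C (O σ) = o)
  have hPX := pr_pos_of_cpr_pos hD hp
  have hPY := pr_pos_of_cpr_pos hD hq
  have hθ₁ : √(p * q) ≤ 1 :=
    sqrt_le_one.2 (mul_le_one₀ (cpr_le_one hD _ _) hq.le (cpr_le_one hD _ _))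
  obtain ⟨s, hs, hshared, hnash⟩ :=
    hrf Bool (betUtility c √(p * q)) (betUtility_mem_Icc c (sqrt_nonneg _) hθ₁)
  have hbet := hnash X o hPX (fun a => if a then 1 else 0)
    (fun a => by cases a <;> norm_num) (by simp)
  have habstain := hnash Y o hPY (fun a => if a then 0 else 1)
    (fun a => by cases a <;> norm_num) (by simp)
  rw [hshared Y X o] at habstain
  simp only [EU_betUtility f c _ hPX.ne', EU_betUtility f c _ hPY.ne', if_true, if_false,
    Bool.false_eq_true, one_mul, zero_mul, add_zero, zero_add,
    exp_log (by positivity : (0 : ℝ) < 2 / (1 + exp (-ε / 2)))] at hbet habstain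
  have hs_sum : s X o true + s X o false = 1 := by rw [← Fintype.sum_bool]; exact (hs X o).2
  exact le_exp_mul_of_exp_neg_half_mul_le_sqrt hp hq.le
    (exp_neg_half_mul_le_sqrt_of_bet hp.le hq hs_sum hbet habstain)

end Game

theorem predParity_of_ratFair_and_fairTreatment_general {S Ψ G Θ Ω : Type}
    [Fintype S] [Fintype Ψ] [Fintype G] [Fintype Ω]
    (D : S → ℝ) (hD : IsProb D) (f : S → Ψ) (g : S → G) (O : S → Θ) (C : Θ → Ω)
    (ε ε' : ℝ)
    (hft : FairTreatment D f g O C ε')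
    (hrf : RatFair D f g O C (Real.log (2 / (1 + Real.exp (-ε / 2))))) :
    PredParity D f g O C ε := by
  intro X Y o c
  by_cases hp : 0 < cpr D (fun σ => f σ = c) (fun σ => C (O σ) = o ∧ g σ = X)
  · have hq := (hft.cpr_pos_iff_cpr_pos hD.1 X Y o c).1 hp
    exact mdist_le_ofReal_of_le_exp_mul hp hq (hrf.cpr_le_exp_mul hD.1 X Y o c hp hq)
      (hrf.cpr_le_exp_mul hD.1 Y X o c hq hp)
  · have hq := mt (hft.cpr_pos_iff_cpr_pos hD.1 X Y o c).2 hp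
    rw [← (cpr_nonneg hD.1 _ _).eq_of_not_lt hp, ← (cpr_nonneg hD.1 _ _).eq_of_not_lt hq]
    simp [mdist]

theorem predParity_of_ratFair_and_fairTreatment {S Ψ G Θ Ω : Type}
    [Fintype S] [Fintype Ψ] [Fintype G] [Fintype Ω]
    (D : S → ℝ) (hD : IsProb D) (f : S → Ψ) (g : S → G) (O : S → Θ) (C : Θ → Ω)
    (ε ε' : ℝ) (hε : 0 ≤ ε)
    (hft : FairTreatment D f g O C ε')
    (hrf : RatFair D f g O C (Real.log (2 / (1 + Real.exp (-ε / 2))))) :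
    PredParity D f g O C ε :=
  predParity_of_ratFair_and_fairTreatment_general D hD f g O C ε ε' hft hrf
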